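/- Let V be a finite type, let Δ be a multidigraph on V with edge multiset E, let L be a list of elements of V × V whose underlying multiset equals E, and let m = L.length. Let Γ be the multidigraph on the vertex type V ⊕ Fin m whose edge multiset consists of, for each index k : Fin m with L-th entry (a,b), the two edges (Sum.inl a, Sum.inr k) and (Sum.inr k, Sum.inl b), each with multiplicity one (so Γ subdivides every edge of Δ by a new midpoint vertex). Then Δ is circuit-Eulerian if and only if Γ is circuit-Eulerian. -/

import Mathlib

/-- A directed walk from `x` to `y` in the multidigraph with edge multiset `E`:
a nonempty list of edges, each an element of `E`, consecutively linked
(head of each edge equals tail of the next), starting at `x` and ending at `y`. -/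
def IsDiwalk {V : Type*} (E : Multiset (V × V)) (x y : V) (L : List (V × V)) : Prop :=
  L ≠ [] ∧ (∀ e ∈ L, e ∈ E) ∧ L.Chain' (fun e f => e.2 = f.1) ∧
    L.head?.map Prod.fst = some x ∧ L.getLast?.map Prod.snd = some y

/-- An Eulerian dicircuit: a directed trail from some vertex back to itself whose
multiset of entries equals the full edge multiset. -/
def CircuitEulerian {V : Type*} (E : Multiset (V × V)) : Prop :=
  ∃ (v : V) (L : List (V × V)), IsDiwalk E v v L ∧ (L : Multiset (V × V)) = E

/-- An Eulerian dipath: a directed trail between two distinct vertices whose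
multiset of entries equals the full edge multiset. -/
def PathEulerian {V : Type*} (E : Multiset (V × V)) : Prop :=
  ∃ (x y : V), x ≠ y ∧ ∃ L : List (V × V), IsDiwalk E x y L ∧ (L : Multiset (V × V)) = E

/-- Strong connectedness: between every two distinct vertices there are directed
walks both ways. -/
def StronglyConnected {V : Type*} (E : Multiset (V × V)) : Prop :=
  ∀ x y : V, x ≠ y → (∃ L, IsDiwalk E x y L) ∧ (∃ L, IsDiwalk E y x L)

/-- Connectedness: every two distinct vertices are joined by a walk in which each
edge of `E` may be traversed in either direction. -/
def UndirConnected {V : Type*} (E : Multiset (V × V)) : Prop :=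
  ∀ x y : V, x ≠ y → Relation.ReflTransGen (fun a b => (a, b) ∈ E ∨ (b, a) ∈ E) x y

/-- Out-degree: the number of edges (with multiplicity) whose tailpoint is `x`. -/
def outDeg {V : Type*} [DecidableEq V] (E : Multiset (V × V)) (x : V) : ℕ :=
  Multiset.countP (fun e => e.1 = x) E

/-- In-degree: the number of edges (with multiplicity) whose headpoint is `x`. -/
def inDeg {V : Type*} [DecidableEq V] (E : Multiset (V × V)) (x : V) : ℕ :=
  Multiset.countP (fun e => e.2 = x) E

/-!
Every midpoint `inr k` of the subdivision has exactly one in-edge `(inl a, inr k)` and one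
out-edge `(inr k, inl b)`, where `(a, b)` is the `k`-th edge. So a closed trail of the subdivision,
rotated to start at an original vertex, is the subdivision of a closed trail `K.map L.get` of the
original graph, and it uses every edge exactly once iff the index list `K` is a permutation of all
edge indices. The same description of Eulerian dicircuits holds in the original graph, since any
rearrangement of `L` is `K.map L.get` for such a `K`.
-/

section Diwalk

variable {V : Type*} {E : Multiset (V × V)} {x y : V}

theorem isDiwalk_iff {l : List (V × V)} :
    IsDiwalk E x y l ↔ l ≠ [] ∧ (∀ e ∈ l, e ∈ E) ∧ l.IsChain (fun e f => e.2 = f.1) ∧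
      l.head?.map Prod.fst = some x ∧ l.getLast?.map Prod.snd = some y :=
  Iff.rfl

theorem isDiwalk_singleton_iff {e : V × V} :
    IsDiwalk E x y [e] ↔ e ∈ E ∧ e.1 = x ∧ e.2 = y := by
  simp [isDiwalk_iff]

theorem isDiwalk_cons_cons_iff {e f : V × V} {l : List (V × V)} :
    IsDiwalk E x y (e :: f :: l) ↔ e ∈ E ∧ e.1 = x ∧ IsDiwalk E e.2 y (f :: l) := by
  simp only [isDiwalk_iff, List.isChain_cons_cons, List.forall_mem_cons,
    List.head?_cons, List.getLast?_cons_cons, Option.map_some, Option.some.injEq, ne_eq,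
    reduceCtorEq, not_false_eq_true, true_and]
  tauto

theorem IsDiwalk.concat {l : List (V × V)} (h : IsDiwalk E x y l) {e : V × V} (he : e ∈ E)
    (hy : e.1 = y) : IsDiwalk E x e.2 (l ++ [e]) := by
  induction l generalizing x with
  | nil => exact absurd rfl h.1
  | cons a l ih =>
    cases l with
    | nil =>
      obtain ⟨ha, rfl, rfl⟩ := isDiwalk_singleton_iff.1 h
      exact isDiwalk_cons_cons_iff.2 ⟨ha, rfl, isDiwalk_singleton_iff.2 ⟨he, hy, rfl⟩⟩
    | cons b l =>
      obtain ⟨ha, rfl, htail⟩ := isDiwalk_cons_cons_iff.1 h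
      exact isDiwalk_cons_cons_iff.2 ⟨ha, rfl, ih htail⟩

theorem IsDiwalk.rotate {e f : V × V} {l : List (V × V)} (h : IsDiwalk E x x (e :: f :: l)) :
    IsDiwalk E e.2 e.2 (f :: l ++ [e]) := by
  obtain ⟨he, hx, h⟩ := isDiwalk_cons_cons_iff.1 h
  exact h.concat he hx

end Diwalk

theorem List.exists_perm_and_map_eq_of_perm_map {α β : Type*} [DecidableEq α] {f : α → β} :
    ∀ {l : List α} {W : List β}, W.Perm (l.map f) → ∃ K : List α, K.Perm l ∧ K.map f = W
  | l, [], h => ⟨[], by simpa using h.symm, rfl⟩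
  | l, w :: W, h => by
    obtain ⟨a, ha, rfl⟩ := List.mem_map.1 (h.subset List.mem_cons_self)
    have hl := List.perm_cons_erase ha
    obtain ⟨K, hK, rfl⟩ :=
      exists_perm_and_map_eq_of_perm_map (List.Perm.cons_inv (h.trans (hl.map f)))
    exact ⟨a :: K, (hK.cons a).trans hl.symm, rfl⟩

theorem circuitEulerian_coe_iff {V : Type*} (L : List (V × V)) :
    CircuitEulerian (L : Multiset (V × V)) ↔
      ∃ K : List (Fin L.length), K.Perm (List.finRange L.length) ∧
        ∃ x, IsDiwalk ↑L x x (K.map L.get) := by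
  constructor
  · rintro ⟨x, W, hW, hWL⟩
    have hperm : W.Perm ((List.finRange L.length).map L.get) := by
      rw [List.map_get_finRange]
      exact Multiset.coe_eq_coe.1 hWL
    obtain ⟨K, hK, rfl⟩ := List.exists_perm_and_map_eq_of_perm_map hperm
    exact ⟨K, hK, x, hW⟩
  · rintro ⟨K, hK, x, hx⟩
    refine ⟨x, _, hx, Multiset.coe_eq_coe.2 ?_⟩
    simpa only [List.map_get_finRange] using hK.map L.get

section Subdivision

open Sum

variable {V : Type*}

def subdivide (L : List (V × V)) (K : List (Fin L.length)) :
    List ((V ⊕ Fin L.length) × (V ⊕ Fin L.length)) :=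
  K.flatMap fun k => [(inl (L.get k).1, inr k), (inr k, inl (L.get k).2)]

def subdivision (L : List (V × V)) : Multiset ((V ⊕ Fin L.length) × (V ⊕ Fin L.length)) :=
  subdivide L (List.finRange L.length)

variable {L : List (V × V)}

@[simp]
theorem subdivide_nil : subdivide L [] = [] := rfl

@[simp]
theorem subdivide_cons (k : Fin L.length) (K : List (Fin L.length)) :
    subdivide L (k :: K) =
      (inl (L.get k).1, inr k) :: (inr k, inl (L.get k).2) :: subdivide L K :=
  rfl

theorem mem_subdivision {e : (V ⊕ Fin L.length) × (V ⊕ Fin L.length)} :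
    e ∈ subdivision L ↔ ∃ k, e = (inl (L.get k).1, inr k) ∨ e = (inr k, inl (L.get k).2) := by
  simp [subdivision, subdivide]

theorem filterMap_getRight?_subdivide (K : List (Fin L.length)) :
    (subdivide L K).filterMap (fun e => e.2.getRight?) = K := by
  induction K with
  | nil => rfl
  | cons k K ih =>
    simp only [subdivide_cons, List.filterMap_cons, getRight?_inl, getRight?_inr, ih]

theorem subdivide_perm_subdivide_iff {K K' : List (Fin L.length)} :
    (subdivide L K).Perm (subdivide L K') ↔ K.Perm K' :=
  ⟨fun h => by
    simpa only [filterMap_getRight?_subdivide] using h.filterMap (fun e => e.2.getRight?),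
   fun h => h.flatMap_right _⟩

theorem eq_of_mem_subdivision_of_fst_eq_inr {e : (V ⊕ Fin L.length) × (V ⊕ Fin L.length)}
    {k : Fin L.length} (he : e ∈ subdivision L) (h : e.1 = inr k) :
    e = (inr k, inl (L.get k).2) := by
  obtain ⟨k', rfl | rfl⟩ := mem_subdivision.1 he <;> simp_all

theorem exists_eq_of_mem_subdivision_of_fst_eq_inl
    {e : (V ⊕ Fin L.length) × (V ⊕ Fin L.length)} {a : V} (he : e ∈ subdivision L)
    (h : e.1 = inl a) : ∃ k, e = (inl (L.get k).1, inr k) := by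
  obtain ⟨k, rfl | rfl⟩ := mem_subdivision.1 he <;> simp_all

theorem isDiwalk_subdivide_iff {K : List (Fin L.length)} {x y : V} :
    IsDiwalk (subdivision L) (inl x) (inl y) (subdivide L K) ↔ IsDiwalk ↑L x y (K.map L.get) := by
  induction K generalizing x with
  | nil => simp [isDiwalk_iff]
  | cons k K ih =>
    have hA : (inl (L.get k).1, inr k) ∈ subdivision L := mem_subdivision.2 ⟨k, .inl rfl⟩
    have hB : (inr k, inl (L.get k).2) ∈ subdivision L := mem_subdivision.2 ⟨k, .inr rfl⟩
    have hk : L.get k ∈ (L : Multiset (V × V)) := Multiset.mem_coe.2 (List.get_mem L k)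
    cases K with
    | nil =>
      simp only [subdivide_cons, subdivide_nil, List.map_cons, List.map_nil,
        isDiwalk_cons_cons_iff, isDiwalk_singleton_iff, hA, hB, hk, inl.injEq, true_and]
    | cons k' K =>
      simp only [subdivide_cons, List.map_cons] at ih ⊢
      rw [isDiwalk_cons_cons_iff, isDiwalk_cons_cons_iff, ih, isDiwalk_cons_cons_iff]
      simp only [hA, hB, hk, inl.injEq, true_and]

theorem exists_eq_subdivide_of_isDiwalk :
    ∀ {C : List ((V ⊕ Fin L.length) × (V ⊕ Fin L.length))} {x y : V},
      IsDiwalk (subdivision L) (inl x) (inl y) C → ∃ K, C = subdivide L K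
  | [], _, _, h => absurd rfl h.1
  | [e], _, _, h => by
    obtain ⟨he, hx, hy⟩ := isDiwalk_singleton_iff.1 h
    obtain ⟨k, rfl⟩ := exists_eq_of_mem_subdivision_of_fst_eq_inl he hx
    simp at hy
  | e :: f :: C, _, _, h => by
    obtain ⟨he, hx, h⟩ := isDiwalk_cons_cons_iff.1 h
    obtain ⟨k, rfl⟩ := exists_eq_of_mem_subdivision_of_fst_eq_inl he hx
    rcases C with _ | ⟨g, C⟩
    · obtain ⟨hf, hk, -⟩ := isDiwalk_singleton_iff.1 h
      obtain rfl := eq_of_mem_subdivision_of_fst_eq_inr hf hk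
      exact ⟨[k], rfl⟩
    · obtain ⟨hf, hk, h⟩ := isDiwalk_cons_cons_iff.1 h
      obtain rfl := eq_of_mem_subdivision_of_fst_eq_inr hf hk
      obtain ⟨K, hK⟩ := exists_eq_subdivide_of_isDiwalk h
      exact ⟨k :: K, by rw [subdivide_cons, ← hK]⟩

/-- A midpoint `inr k` has the single out-edge `(inr k, inl _)`, so a circuit through it can be
rotated to start at the next vertex. -/
theorem exists_isDiwalk_inl_of_isDiwalk {w : V ⊕ Fin L.length}
    {C : List ((V ⊕ Fin L.length) × (V ⊕ Fin L.length))}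
    (hC : IsDiwalk (subdivision L) w w C) :
    ∃ x C', IsDiwalk (subdivision L) (inl x) (inl x) C' ∧ C'.Perm C := by
  rcases w with x | k
  · exact ⟨x, C, hC, .refl C⟩
  rcases C with _ | ⟨e, _ | ⟨f, C⟩⟩
  · exact absurd rfl hC.1
  · obtain ⟨he, hk, hk'⟩ := isDiwalk_singleton_iff.1 hC
    simp [eq_of_mem_subdivision_of_fst_eq_inr he hk] at hk'
  · obtain ⟨he, hk, -⟩ := isDiwalk_cons_cons_iff.1 hC
    obtain rfl := eq_of_mem_subdivision_of_fst_eq_inr he hk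
    exact ⟨(L.get k).2, _, hC.rotate, List.perm_append_singleton _ _⟩

theorem circuitEulerian_subdivision_iff :
    CircuitEulerian (subdivision L) ↔
      ∃ K : List (Fin L.length), K.Perm (List.finRange L.length) ∧
        ∃ x, IsDiwalk ↑L x x (K.map L.get) := by
  constructor
  · rintro ⟨w, C, hC, hCE⟩
    obtain ⟨x, C', hC', hperm⟩ := exists_isDiwalk_inl_of_isDiwalk hC
    obtain ⟨K, rfl⟩ := exists_eq_subdivide_of_isDiwalk hC'
    exact ⟨K, subdivide_perm_subdivide_iff.1 (hperm.trans (Multiset.coe_eq_coe.1 hCE)), x,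
      isDiwalk_subdivide_iff.1 hC'⟩
  · rintro ⟨K, hK, x, hx⟩
    exact ⟨inl x, subdivide L K, isDiwalk_subdivide_iff.2 hx,
      Multiset.coe_eq_coe.2 (subdivide_perm_subdivide_iff.2 hK)⟩

end Subdivision

theorem circuitEulerian_iff_subdivision_general
    {V : Type*} (E : Multiset (V × V))
    (L : List (V × V)) (hL : (L : Multiset (V × V)) = E) :
    CircuitEulerian E ↔
      CircuitEulerian
        (((List.finRange L.length).flatMap fun k : Fin L.length =>
            [(Sum.inl (L.get k).1, Sum.inr k), (Sum.inr k, Sum.inl (L.get k).2)] :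
          List ((V ⊕ Fin L.length) × (V ⊕ Fin L.length))) :
          Multiset ((V ⊕ Fin L.length) × (V ⊕ Fin L.length))) := by
  subst hL
  exact (circuitEulerian_coe_iff L).trans circuitEulerian_subdivision_iff.symm

/-- **Clark's gambit.** Subdividing every edge of a multidigraph `Δ` by a new
midpoint vertex produces a multidigraph `Γ` that is circuit-Eulerian if and only
if `Δ` is. -/
theorem circuitEulerian_iff_subdivision
    {V : Type*} [Fintype V] [DecidableEq V] (E : Multiset (V × V))
    (L : List (V × V)) (hL : (L : Multiset (V × V)) = E) :
    CircuitEulerian E ↔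
      CircuitEulerian
        (((List.finRange L.length).flatMap fun k : Fin L.length =>
            [(Sum.inl (L.get k).1, Sum.inr k), (Sum.inr k, Sum.inl (L.get k).2)] :
          List ((V ⊕ Fin L.length) × (V ⊕ Fin L.length))) :
          Multiset ((V ⊕ Fin L.length) × (V ⊕ Fin L.length))) :=
  circuitEulerian_iff_subdivision_general E L hL
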